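/- There is a universal constant $c' > 0$ such that for every symmetric convex body $K \subset \mathbb{R}^n$, the ratio of the mean to the maximum of $\|\cdot\|_K$ over the unit sphere satisfies $\frac{M(K)}{b(K)} \ge \frac{c'}{\sqrt{n}}$. -/

import Mathlib

noncomputable section
open MeasureTheory Metric
open scoped ENNReal RealInnerProductSpace

/-- `Euc n` is the Euclidean space `ℝⁿ`. -/
abbrev Euc (n : ℕ) := EuclideanSpace ℝ (Fin n)

/-- The unit sphere `S^{n-1} ⊂ ℝⁿ`. -/
abbrev Sph (n : ℕ) := Metric.sphere (0 : Euc n) 1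

/-- A rotation (linear isometry) of `ℝⁿ` restricted to the unit sphere. -/
def sphereRot {n : ℕ} (g : Euc n ≃ₗᵢ[ℝ] Euc n) (x : Sph n) : Sph n :=
  ⟨g x, by
    have hx : ‖(x : Euc n)‖ = 1 := by simpa using mem_sphere_zero_iff_norm.mp x.2
    simp [mem_sphere_zero_iff_norm, g.norm_map, hx]⟩

/-- `ν` is the normalized Haar (uniform, rotation invariant probability) measure
on the unit sphere. -/
def IsHaarSphere {n : ℕ} (ν : Measure (Sph n)) : Prop :=
  IsProbabilityMeasure ν ∧ ∀ g : Euc n ≃ₗᵢ[ℝ] Euc n, ν.map (sphereRot g) = ν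

/-- `projNorm V x = |P_V x|`, the Euclidean norm of the orthogonal projection of `x`
onto the subspace `V`. -/
def projNorm {n : ℕ} (V : Submodule ℝ (Euc n)) (x : Euc n) : ℝ :=
  ‖(Submodule.orthogonalProjection V x : Euc n)‖

/-- The orthogonal projection onto `V` as a continuous linear map `ℝⁿ → ℝⁿ`. -/
def projCLM {n : ℕ} (V : Submodule ℝ (Euc n)) : Euc n →L[ℝ] Euc n :=
  V.subtypeL.comp (Submodule.orthogonalProjection V)

/-- The Grassmannian `G_{n,k}` of `k`-dimensional linear subspaces of `ℝⁿ`. -/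
def Gr (n k : ℕ) := {V : Submodule ℝ (Euc n) // Module.finrank ℝ V = k}

/-- Borel measurable structure on the Grassmannian, induced by the embedding
`V ↦ P_V` into the space of continuous linear maps. -/
instance {n k : ℕ} : MeasurableSpace (Gr n k) :=
  MeasurableSpace.comap (fun V => projCLM V.1) (borel _)

/-- The action of a rotation of `ℝⁿ` on the Grassmannian. -/
def grRot {n k : ℕ} (g : Euc n ≃ₗᵢ[ℝ] Euc n) (V : Gr n k) : Gr n k :=
  ⟨V.1.map g.toLinearEquiv.toLinearMap,
    (LinearEquiv.finrank_map_eq g.toLinearEquiv V.1).trans V.2⟩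

/-- `μ` is the normalized Haar (rotation invariant probability) measure on the
Grassmannian `G_{n,k}`. -/
def IsHaarGrass {n k : ℕ} (μ : Measure (Gr n k)) : Prop :=
  IsProbabilityMeasure μ ∧ ∀ g : Euc n ≃ₗᵢ[ℝ] Euc n, μ.map (grRot g) = μ

/-!
Let `x₀` be a unit vector at which `‖·‖_K` attains its maximum `b`. The Euclidean ball of radius
`1 / b` lies in `K` and touches `∂K` at `x₀ / b`, so the supporting hyperplane of `K` there is
`x₀ᗮ`; this gives `‖w‖_K ≥ b |⟪w, x₀⟫|` and hence `M(K) ≥ b ∫ |⟪x, x₀⟫| dν`. By rotation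
invariance the second and fourth moments of `⟪x, x₀⟫` are `1 / n` and `3 / (n (n + 2))`, and
the interpolation `∫ a² ≤ (∫ a)^{2/3} (∫ a⁴)^{1/3}` bounds the first absolute moment below by
`1 / √(3 n)`.
-/

open Filter Topology

section Seminorm

variable {E : Type*} [NormedAddCommGroup E]

lemma Seminorm.le_mul_norm_of_forall_norm_eq_one [NormedSpace ℝ E] (p : Seminorm ℝ E) {b : ℝ}
    (hb : ∀ x, ‖x‖ = 1 → p x ≤ b) (x : E) : p x ≤ b * ‖x‖ := by
  rcases eq_or_ne x 0 with rfl | hx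
  · simp
  have hx' : ‖x‖ ≠ 0 := norm_ne_zero_iff.mpr hx
  calc p x = ‖x‖ * p (‖x‖⁻¹ • x) := by
        rw [map_smul_eq_mul, norm_inv, norm_norm, mul_inv_cancel_left₀ hx']
    _ ≤ ‖x‖ * b := by
        gcongr
        exact hb _ (by rw [norm_smul, norm_inv, norm_norm, inv_mul_cancel₀ hx'])
    _ = b * ‖x‖ := mul_comm _ _

/- A supporting hyperplane of the unit ball of `p` at `b⁻¹ • x₀` also supports the Euclidean
ball of radius `b⁻¹` contained in it, so it is orthogonal to `x₀`. -/
lemma Seminorm.mul_abs_inner_le [InnerProductSpace ℝ E] (p : Seminorm ℝ E) {b : ℝ}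
    (hp : ∀ x, p x ≤ b * ‖x‖) {x₀ : E} (hx₀ : ‖x₀‖ = 1) (hpx₀ : p x₀ = b) (w : E) :
    b * |⟪w, x₀⟫| ≤ p w := by
  have hb : 0 ≤ b := hpx₀ ▸ apply_nonneg p x₀
  have key : ∀ w, b * ⟪w, x₀⟫ ≤ p w := by
    intro w
    have approx : ∀ t > 0, b * ⟪w, x₀⟫ - t * (b * ‖w‖ ^ 2 / 2) ≤ p w := by
      intro t ht
      have triangle : b ≤ b * ‖x₀ - t • w‖ + t * p w := by
        calc b = p (x₀ - t • w + t • w) := by rw [sub_add_cancel, hpx₀]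
          _ ≤ p (x₀ - t • w) + p (t • w) := map_add_le_add p _ _
          _ ≤ b * ‖x₀ - t • w‖ + t * p w := by
              rw [map_smul_eq_mul, Real.norm_of_nonneg ht.le]
              gcongr
              exact hp _
      have hsq : ‖x₀ - t • w‖ ^ 2 = 1 - 2 * t * ⟪w, x₀⟫ + t ^ 2 * ‖w‖ ^ 2 := by
        rw [norm_sub_sq_real, hx₀, inner_smul_right, norm_smul, Real.norm_of_nonneg ht.le,
          real_inner_comm]
        ring
      have hnorm : ‖x₀ - t • w‖ ≤ 1 - t * ⟪w, x₀⟫ + t ^ 2 * ‖w‖ ^ 2 / 2 := by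
        nlinarith [sq_nonneg (‖x₀ - t • w‖ - 1)]
      have : t * (b * ⟪w, x₀⟫ - t * (b * ‖w‖ ^ 2 / 2)) ≤ t * p w := by
        nlinarith [mul_le_mul_of_nonneg_left hnorm hb]
      exact le_of_mul_le_mul_left this ht
    have hlim : Tendsto (fun t : ℝ => b * ⟪w, x₀⟫ - t * (b * ‖w‖ ^ 2 / 2)) (𝓝[>] 0)
        (𝓝 (b * ⟪w, x₀⟫)) := by
      have : Continuous fun t : ℝ => b * ⟪w, x₀⟫ - t * (b * ‖w‖ ^ 2 / 2) := by fun_prop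
      simpa using (this.tendsto 0).mono_left nhdsWithin_le_nhds
    exact le_of_tendsto hlim (eventually_nhdsWithin_of_forall approx)
  rcases abs_cases ⟪w, x₀⟫ with ⟨h, -⟩ | ⟨h, -⟩
  · rw [h]
    exact key w
  · rw [h, ← inner_neg_left, ← map_neg_eq_map]
    exact key (-w)

end Seminorm

lemma three_mul_sq_mul_integral_sq_le {α : Type*} [MeasurableSpace α] {μ : Measure α}
    {f : α → ℝ} (h1 : Integrable f μ) (h2 : Integrable (fun x => f x ^ 2) μ)
    (h4 : Integrable (fun x => f x ^ 4) μ) {s : ℝ} (hs : 0 ≤ s) :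
    3 * s ^ 2 * ∫ x, f x ^ 2 ∂μ ≤ 2 * s ^ 3 * ∫ x, |f x| ∂μ + ∫ x, f x ^ 4 ∂μ := by
  rw [← integral_const_mul, ← integral_const_mul, ← integral_add (h1.abs.const_mul _) h4]
  refine integral_mono (h2.const_mul _) ((h1.abs.const_mul _).add h4) fun x => ?_
  -- `2 s³ a + a⁴ - 3 s² a² = a (a - s)² (a + 2 s)` for `a = |f x|`
  have : 0 ≤ |f x| * (|f x| - s) ^ 2 * (|f x| + 2 * s) := by positivity
  dsimp only
  rw [← sq_abs (f x), ← (by decide : Even 4).pow_abs]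
  nlinarith [this]

lemma continuous_sphereRot {n : ℕ} (g : Euc n ≃ₗᵢ[ℝ] Euc n) : Continuous (sphereRot g) :=
  (g.continuous.comp continuous_subtype_val).subtype_mk _

lemma Continuous.integrable_of_compactSpace {X E : Type*} [TopologicalSpace X] [CompactSpace X]
    [MeasurableSpace X] [OpensMeasurableSpace X] [NormedAddCommGroup E] {μ : Measure X}
    [IsFiniteMeasure μ] {f : X → E} (hf : Continuous f) : Integrable f μ :=
  hf.integrable_of_hasCompactSupport (HasCompactSupport.of_compactSpace f)

section Reflection

variable {F : Type*} [NormedAddCommGroup F] [InnerProductSpace ℝ F]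

lemma exists_linearIsometryEquiv_apply_eq {u v : F} (h : ‖u‖ = ‖v‖) :
    ∃ g : F ≃ₗᵢ[ℝ] F, g u = v :=
  ⟨_, Submodule.reflection_sub h⟩

lemma exists_linearIsometryEquiv_apply_eq_apply_eq {u₁ u₂ v₁ v₂ : F} (h₁ : ‖u₁‖ = ‖v₁‖)
    (h₂ : ‖u₂‖ = ‖v₂‖) (hu : ⟪u₁, u₂⟫ = 0) (hv : ⟪v₁, v₂⟫ = 0) :
    ∃ g : F ≃ₗᵢ[ℝ] F, g u₁ = v₁ ∧ g u₂ = v₂ := by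
  set R₁ := Submodule.reflection (ℝ ∙ (u₁ - v₁))ᗮ
  have hR₁ : R₁ u₁ = v₁ := Submodule.reflection_sub h₁
  set w := R₁ u₂
  have hw : ‖w‖ = ‖v₂‖ := by rw [R₁.norm_map, h₂]
  have hwv₁ : ⟪w, v₁⟫ = 0 := by
    rw [← hR₁, LinearIsometryEquiv.inner_map_map, real_inner_comm, hu]
  set R₂ := Submodule.reflection (ℝ ∙ (w - v₂))ᗮ
  have hR₂v₁ : R₂ v₁ = v₁ := by
    apply Submodule.reflection_mem_subspace_eq_self
    rw [Submodule.mem_orthogonal_singleton_iff_inner_right, inner_sub_left, hwv₁,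
      real_inner_comm, hv, sub_zero]
  exact ⟨R₁.trans R₂, by simp [hR₁, hR₂v₁], Submodule.reflection_sub hw⟩

end Reflection

namespace IsHaarSphere

variable {n : ℕ} {ν : Measure (Sph n)}

lemma integral_comp_linearIsometryEquiv (hν : IsHaarSphere ν) (g : Euc n ≃ₗᵢ[ℝ] Euc n)
    {f : Euc n → ℝ} (hf : Continuous f) :
    ∫ x : Sph n, f (g x) ∂ν = ∫ x : Sph n, f x ∂ν := by
  conv_rhs => rw [← hν.2 g]
  exact (integral_map (continuous_sphereRot g).aemeasurable
    (hf.comp continuous_subtype_val).aestronglyMeasurable).symm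

lemma integral_comp_inner_eq (hν : IsHaarSphere ν) {u v : Euc n} (h : ‖u‖ = ‖v‖)
    {φ : ℝ → ℝ} (hφ : Continuous φ) :
    ∫ x : Sph n, φ ⟪(x : Euc n), u⟫ ∂ν = ∫ x : Sph n, φ ⟪(x : Euc n), v⟫ ∂ν := by
  obtain ⟨g, hg⟩ := exists_linearIsometryEquiv_apply_eq h
  rw [← hν.integral_comp_linearIsometryEquiv g (f := fun y => φ ⟪y, v⟫) (by fun_prop), ← hg]
  simp_rw [LinearIsometryEquiv.inner_map_map]

lemma integral_comp_inner_inner_eq (hν : IsHaarSphere ν) {u₁ u₂ v₁ v₂ : Euc n}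
    (h₁ : ‖u₁‖ = ‖v₁‖) (h₂ : ‖u₂‖ = ‖v₂‖) (hu : ⟪u₁, u₂⟫ = 0) (hv : ⟪v₁, v₂⟫ = 0)
    {φ : ℝ → ℝ → ℝ} (hφ : Continuous (Function.uncurry φ)) :
    ∫ x : Sph n, φ ⟪(x : Euc n), u₁⟫ ⟪(x : Euc n), u₂⟫ ∂ν
      = ∫ x : Sph n, φ ⟪(x : Euc n), v₁⟫ ⟪(x : Euc n), v₂⟫ ∂ν := by
  obtain ⟨g, hg₁, hg₂⟩ := exists_linearIsometryEquiv_apply_eq_apply_eq h₁ h₂ hu hv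
  have hf : Continuous fun y : Euc n => φ ⟪y, v₁⟫ ⟪y, v₂⟫ :=
    hφ.comp ((continuous_id.inner continuous_const).prodMk
      (continuous_id.inner continuous_const))
  rw [← hν.integral_comp_linearIsometryEquiv g hf, ← hg₁, ← hg₂]
  simp_rw [LinearIsometryEquiv.inner_map_map]

lemma integral_inner_sq (hν : IsHaarSphere ν) {u : Euc n} (hu : ‖u‖ = 1) :
    ∫ x : Sph n, ⟪(x : Euc n), u⟫ ^ 2 ∂ν = (n : ℝ)⁻¹ := by
  have := hν.1
  let e := EuclideanSpace.basisFun (Fin n) ℝ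
  have hsum : ∑ i, ∫ x : Sph n, ⟪(x : Euc n), e i⟫ ^ 2 ∂ν = 1 := by
    rw [← integral_finsetSum _ fun i _ => Continuous.integrable_of_compactSpace (by fun_prop)]
    simp_rw [e.sum_sq_inner_left, norm_eq_of_mem_sphere]
    simp
  have he : ∀ i, ∫ x : Sph n, ⟪(x : Euc n), e i⟫ ^ 2 ∂ν = ∫ x : Sph n, ⟪(x : Euc n), u⟫ ^ 2 ∂ν :=
    fun i => hν.integral_comp_inner_eq (by rw [hu, e.orthonormal.1 i]) (continuous_pow 2)
  simp only [he, Finset.sum_const, Finset.card_univ, Fintype.card_fin, nsmul_eq_mul] at hsum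
  exact eq_inv_of_mul_eq_one_right hsum

/- Rotating the orthonormal pair `(u, v)` by `π / 4` gives
`∫ ⟪x, u⟫² ⟪x, v⟫² = ∫ ((⟪x, u⟫² - ⟪x, v⟫²) / 2)²`. -/
lemma integral_inner_pow_four_eq_three_mul (hν : IsHaarSphere ν) {u v : Euc n}
    (hu : ‖u‖ = 1) (hv : ‖v‖ = 1) (huv : ⟪u, v⟫ = 0) :
    ∫ x : Sph n, ⟪(x : Euc n), u⟫ ^ 4 ∂ν
      = 3 * ∫ x : Sph n, ⟪(x : Euc n), u⟫ ^ 2 * ⟪(x : Euc n), v⟫ ^ 2 ∂ν := by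
  have := hν.1
  set c := √2
  have hc : c ^ 2 = 2 := Real.sq_sqrt zero_le_two
  set w₁ := c⁻¹ • (u + v)
  set w₂ := c⁻¹ • (u - v)
  have hvu : ⟪v, u⟫ = 0 := by rw [real_inner_comm, huv]
  have hw₁ : ‖w₁‖ = ‖u‖ := by
    rw [← sq_eq_sq₀ (norm_nonneg _) (norm_nonneg _), norm_smul, mul_pow, norm_add_sq_real, huv,
      norm_inv, Real.norm_of_nonneg (Real.sqrt_nonneg 2), inv_pow, hc, hu, hv]
    norm_num
  have hw₂ : ‖w₂‖ = ‖v‖ := by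
    rw [← sq_eq_sq₀ (norm_nonneg _) (norm_nonneg _), norm_smul, mul_pow, norm_sub_sq_real, huv,
      norm_inv, Real.norm_of_nonneg (Real.sqrt_nonneg 2), inv_pow, hc, hu, hv]
    norm_num
  have hw : ⟪w₁, w₂⟫ = 0 := by
    simp only [w₁, w₂, inner_smul_left, inner_smul_right, inner_add_left, inner_sub_right,
      real_inner_self_eq_norm_sq, hu, hv, huv, hvu]
    ring
  have hrot := hν.integral_comp_inner_inner_eq hw₁ hw₂ hw huv
    (φ := fun s t => s ^ 2 * t ^ 2) (by fun_prop)
  have hpt : ∀ x : Euc n, ⟪x, w₁⟫ ^ 2 * ⟪x, w₂⟫ ^ 2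
      = (⟪x, u⟫ ^ 4 - 2 * (⟪x, u⟫ ^ 2 * ⟪x, v⟫ ^ 2) + ⟪x, v⟫ ^ 4) / 4 := by
    intro x
    simp only [w₁, w₂, inner_smul_right, inner_add_right, inner_sub_right]
    field_simp
    rw [show c ^ 4 = (c ^ 2) ^ 2 by ring, hc]
    ring
  have hv4 : ∫ x : Sph n, ⟪(x : Euc n), v⟫ ^ 4 ∂ν = ∫ x : Sph n, ⟪(x : Euc n), u⟫ ^ 4 ∂ν :=
    hν.integral_comp_inner_eq (hv.trans hu.symm) (continuous_pow 4)
  simp only [hpt] at hrot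
  rw [integral_div, integral_add, integral_sub, integral_const_mul, hv4] at hrot
  · linarith
  all_goals exact Continuous.integrable_of_compactSpace (by fun_prop)

lemma integral_inner_pow_four_add_mul (hν : IsHaarSphere ν) {i j : Fin n} (hij : i ≠ j) :
    ∫ x : Sph n, ⟪(x : Euc n), EuclideanSpace.basisFun (Fin n) ℝ i⟫ ^ 4 ∂ν
      + (n - 1) * ∫ x : Sph n, ⟪(x : Euc n), EuclideanSpace.basisFun (Fin n) ℝ i⟫ ^ 2
          * ⟪(x : Euc n), EuclideanSpace.basisFun (Fin n) ℝ j⟫ ^ 2 ∂ν = (n : ℝ)⁻¹ := by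
  have := hν.1
  set e := EuclideanSpace.basisFun (Fin n) ℝ
  have hsum : ∑ k, ∫ x : Sph n, ⟪(x : Euc n), e i⟫ ^ 2 * ⟪(x : Euc n), e k⟫ ^ 2 ∂ν = (n : ℝ)⁻¹ := by
    rw [← integral_finsetSum _ fun k _ => Continuous.integrable_of_compactSpace (by fun_prop)]
    simp_rw [← Finset.mul_sum, e.sum_sq_inner_left, norm_eq_of_mem_sphere, one_pow, mul_one]
    exact hν.integral_inner_sq (e.orthonormal.1 i)
  have hoff : ∀ k ∈ ({i}ᶜ : Finset (Fin n)),
      ∫ x : Sph n, ⟪(x : Euc n), e i⟫ ^ 2 * ⟪(x : Euc n), e k⟫ ^ 2 ∂ν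
        = ∫ x : Sph n, ⟪(x : Euc n), e i⟫ ^ 2 * ⟪(x : Euc n), e j⟫ ^ 2 ∂ν := by
    intro k hk
    exact hν.integral_comp_inner_inner_eq rfl (by rw [e.orthonormal.1, e.orthonormal.1])
      (e.orthonormal.2 (Ne.symm (by simpa using hk))) (e.orthonormal.2 hij)
      (φ := fun s t => s ^ 2 * t ^ 2) (by fun_prop)
  rw [Fintype.sum_eq_add_sum_compl i, Finset.sum_congr rfl hoff, Finset.sum_const,
    Finset.card_compl, Finset.card_singleton, Fintype.card_fin, nsmul_eq_mul,
    Nat.cast_sub (Fin.pos i), Nat.cast_one] at hsum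
  simpa only [← pow_add] using hsum

lemma integral_inner_pow_four (hν : IsHaarSphere ν) (hn : 2 ≤ n) {u : Euc n} (hu : ‖u‖ = 1) :
    ∫ x : Sph n, ⟪(x : Euc n), u⟫ ^ 4 ∂ν = 3 / (n * (n + 2)) := by
  set e := EuclideanSpace.basisFun (Fin n) ℝ
  have h01 : (⟨0, by omega⟩ : Fin n) ≠ ⟨1, by omega⟩ := by simp
  rw [hν.integral_comp_inner_eq (hu.trans (e.orthonormal.1 ⟨0, by omega⟩).symm)
    (continuous_pow 4)]
  have h3 := hν.integral_inner_pow_four_eq_three_mul (e.orthonormal.1 _) (e.orthonormal.1 _)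
    (e.orthonormal.2 h01)
  have hsum := hν.integral_inner_pow_four_add_mul h01
  have hn' : (0 : ℝ) < n := by positivity
  rw [h3] at hsum ⊢
  field_simp at hsum ⊢
  linarith

lemma integral_inner_pow_four_le (hν : IsHaarSphere ν) {u : Euc n} (hu : ‖u‖ = 1) :
    ∫ x : Sph n, ⟪(x : Euc n), u⟫ ^ 4 ∂ν ≤ 3 / n ^ 2 := by
  have := hν.1
  rcases lt_or_ge n 2 with hn | hn
  · calc ∫ x : Sph n, ⟪(x : Euc n), u⟫ ^ 4 ∂ν ≤ ∫ x : Sph n, ⟪(x : Euc n), u⟫ ^ 2 ∂ν := by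
          refine integral_mono (Continuous.integrable_of_compactSpace (by fun_prop))
            (Continuous.integrable_of_compactSpace (by fun_prop)) fun x => ?_
          have h := abs_real_inner_le_norm (x : Euc n) u
          rw [norm_eq_of_mem_sphere, hu, one_mul, ← sq_le_one_iff₀ (abs_nonneg _), sq_abs] at h
          nlinarith [sq_nonneg ⟪(x : Euc n), u⟫]
      _ ≤ 3 / n ^ 2 := by
          rw [hν.integral_inner_sq hu]
          interval_cases n <;> norm_num
  · have hn' : (0 : ℝ) < n := by positivity
    rw [hν.integral_inner_pow_four hn hu]
    exact div_le_div_of_nonneg_left zero_le_three (by positivity) (by nlinarith)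

/- Integrating `3 s² a² ≤ 2 s³ a + a⁴` for `a = |⟪x, u⟫|` with the optimal `s = √(3 / n)`. -/
lemma one_div_sqrt_three_mul_sqrt_le_integral_abs_inner (hν : IsHaarSphere ν) {u : Euc n}
    (hu : ‖u‖ = 1) :
    1 / (√3 * √n) ≤ ∫ x : Sph n, |⟪(x : Euc n), u⟫| ∂ν := by
  have := hν.1
  have hn : (0 : ℝ) < n := by
    rcases Nat.eq_zero_or_pos n with rfl | hn
    · simp [Subsingleton.elim u 0] at hu
    · exact_mod_cast hn
  have key := three_mul_sq_mul_integral_sq_le (μ := ν) (f := fun x : Sph n => ⟪(x : Euc n), u⟫)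
    (s := √3 / √n)
    (Continuous.integrable_of_compactSpace (by fun_prop))
    (Continuous.integrable_of_compactSpace (by fun_prop))
    (Continuous.integrable_of_compactSpace (by fun_prop)) (by positivity)
  have h4 := hν.integral_inner_pow_four_le hu
  rw [hν.integral_inner_sq hu] at key
  set A := ∫ x : Sph n, |⟪(x : Euc n), u⟫| ∂ν
  set r := √n
  set q := √3
  have hr : r ^ 2 = n := Real.sq_sqrt hn.le
  have hq : q ^ 2 = 3 := Real.sq_sqrt zero_le_three
  have hr0 : 0 < r := by positivity
  have hq0 : 0 < q := by positivity
  rw [← hr] at key h4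
  rw [div_le_iff₀ (by positivity)]
  field_simp at key h4
  nlinarith

end IsHaarSphere

/-- There is a universal constant `c' > 0` with `M(K)/b(K) ≥ c'/√n` for every symmetric
convex body `K ⊂ ℝⁿ`. -/
theorem stmt_8 :
    ∃ c' : ℝ, 0 < c' ∧ ∀ n : ℕ, 0 < n →
      ∀ K : Set (Euc n), Convex ℝ K → K = -K → IsCompact K → (0 : Euc n) ∈ interior K →
      ∀ ν : Measure (Sph n), IsHaarSphere ν →
      ∀ M b : ℝ, M = ∫ x : Sph n, gauge K (x : Euc n) ∂ν →
      ((∀ x : Euc n, ‖x‖ = 1 → gauge K x ≤ b) ∧ ∃ x : Euc n, ‖x‖ = 1 ∧ gauge K x = b) →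
      c' / Real.sqrt n ≤ M / b := by
  refine ⟨1 / √3, by positivity, fun n _ K hKc hKs hKcp hK0 ν hν M b hM ⟨hb, x₀, hx₀, hbx₀⟩ => ?_⟩
  have := hν.1
  have hK : K ∈ 𝓝 0 := mem_interior_iff_mem_nhds.mp hK0
  have hKsymm : ∀ ⦃x⦄, x ∈ K → -x ∈ K := fun x hx => by rwa [hKs, Set.neg_mem_neg]
  let p := gaugeSeminorm ((balanced_iff_neg_mem hKc).2 hKsymm) hKc (absorbent_nhds_zero hK)
  have hb0 : 0 < b := hbx₀ ▸ (gauge_pos (absorbent_nhds_zero hK)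
    ((NormedSpace.isVonNBounded_iff ℝ).2 hKcp.isBounded)).2 (norm_ne_zero_iff.mp (by simp [hx₀]))
  have hlow : ∀ w, b * |⟪w, x₀⟫| ≤ gauge K w :=
    p.mul_abs_inner_le (p.le_mul_norm_of_forall_norm_eq_one hb) hx₀ hbx₀
  have hbM : b * ∫ x : Sph n, |⟪(x : Euc n), x₀⟫| ∂ν ≤ M := by
    rw [hM, ← integral_const_mul]
    exact integral_mono (Continuous.integrable_of_compactSpace (by fun_prop))
      (Continuous.integrable_of_compactSpace
        ((continuous_gauge hKc hK).comp continuous_subtype_val)) fun x => hlow x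
  rw [div_div, le_div_iff₀ hb0, mul_comm]
  calc b * (1 / (√3 * √n)) ≤ b * ∫ x : Sph n, |⟪(x : Euc n), x₀⟫| ∂ν :=
        mul_le_mul_of_nonneg_left (hν.one_div_sqrt_three_mul_sqrt_le_integral_abs_inner hx₀) hb0.le
    _ ≤ M := hbM
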